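/- arXiv:2304.12564 — 2 statements merged into one kernel-verified Lean document; each statement's English description precedes it below -/
import Mathlib

section
/- Fix $\alpha \in (0,2)$ and $M > 0$. Let $(\Gamma_j)_{j\geq 0}$ be the arrival times of a unit-rate Poisson process on $(0,\infty)$ (so $\Gamma_j \sim \mathrm{Gamma}(j+1,1)$ and the $\Gamma_j$ are partial sums of i.i.d. Exp(1) variables), and set $\Gamma_j^M = \max(\Gamma_j, M^{-\alpha})$. Then $\sum_{j=0}^\infty \mathbf{E}[(\Gamma_j^M)^{-2/\alpha}] = \frac{2}{2-\alpha}M^{2-\alpha}$. -/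
/-!
The `Gamma(j + 1, 1)` density at `x ≥ 0` is the Poisson weight `e^{-x} x^j / j!`, so these
densities sum to the indicator of `[0, ∞)`. By monotone convergence the sum of the expectations
is therefore `∫_0^∞ max(x, c)^{-2/α} dx` with `c = M^{-α}`, which splits at `c` into
`c^{1-2/α} + (α / (2 - α)) c^{1-2/α}`, and `c^{1-2/α} = M^{2-α}`.
-/

open MeasureTheory ProbabilityTheory Set
open scoped ENNReal NNReal Nat

namespace ProbabilityTheory

lemma gammaPDF_natCast_add_one_one_of_nonneg (j : ℕ) {x : ℝ} (hx : 0 ≤ x) :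
    gammaPDF (j + 1) 1 x = ENNReal.ofReal (Real.exp (-x) * x ^ j / j !) := by
  rw [gammaPDF_of_nonneg hx, Real.one_rpow, Real.Gamma_nat_eq_factorial, add_sub_cancel_right,
    Real.rpow_natCast, one_mul]
  ring_nf

lemma tsum_gammaPDF_natCast_add_one_one (x : ℝ) :
    ∑' j : ℕ, gammaPDF (j + 1) 1 x = (Ici 0).indicator 1 x := by
  rcases lt_or_ge x 0 with hx | hx
  · simp [gammaPDF_of_neg hx, not_le.mpr hx]
  · lift x to ℝ≥0 using hx
    simp_rw [gammaPDF_natCast_add_one_one_of_nonneg _ x.coe_nonneg]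
    rw [← ENNReal.ofReal_tsum_of_nonneg (fun _ ↦ by positivity)
      (hasSum_one_poissonMeasure x).summable, (hasSum_one_poissonMeasure x).tsum_eq]
    simp

lemma tsum_lintegral_gammaMeasure_natCast_add_one_one {f : ℝ → ℝ≥0∞} (hf : Measurable f) :
    ∑' j : ℕ, ∫⁻ x, f x ∂gammaMeasure (j + 1) 1 = ∫⁻ x in Ici 0, f x := by
  have hpdf : ∀ j : ℕ, Measurable (gammaPDF (j + 1) 1) :=
    fun _ ↦ (measurable_gammaPDFReal _ _).ennreal_ofReal
  simp_rw [gammaMeasure, lintegral_withDensity_eq_lintegral_mul _ (hpdf _) hf]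
  rw [← lintegral_tsum fun j ↦ ((hpdf j).mul hf).aemeasurable,
    ← lintegral_indicator measurableSet_Ici]
  congr 1 with x
  simp only [Pi.mul_apply, ENNReal.tsum_mul_right, tsum_gammaPDF_natCast_add_one_one]
  by_cases hx : x ∈ Ici (0 : ℝ) <;> simp [hx]

lemma tsum_integral_gammaMeasure_natCast_add_one_one {f : ℝ → ℝ} (hf : Measurable f)
    (hf_nonneg : ∀ x, 0 ≤ f x) (hf_int : IntegrableOn f (Ioi 0)) :
    ∑' j : ℕ, ∫ x, f x ∂gammaMeasure (j + 1) 1 = ∫ x in Ioi 0, f x := by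
  have hsum : ∑' j : ℕ, ∫⁻ x, ENNReal.ofReal (f x) ∂gammaMeasure (j + 1) 1 =
      ENNReal.ofReal (∫ x in Ioi 0, f x) := by
    rw [tsum_lintegral_gammaMeasure_natCast_add_one_one hf.ennreal_ofReal,
      ← Measure.restrict_congr_set Ioi_ae_eq_Ici,
      ofReal_integral_eq_lintegral_ofReal hf_int (ae_of_all _ hf_nonneg)]
  have hfin := ENNReal.ne_top_of_tsum_ne_top (hsum ▸ ENNReal.ofReal_ne_top)
  rw [tsum_congr fun j ↦ integral_eq_lintegral_of_nonneg_ae (ae_of_all _ hf_nonneg)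
    hf.aestronglyMeasurable, ← ENNReal.tsum_toReal_eq hfin, hsum,
    ENNReal.toReal_ofReal (setIntegral_nonneg measurableSet_Ioi fun x _ ↦ hf_nonneg x)]

end ProbabilityTheory

section TruncatedPower

variable {p c : ℝ}

lemma integrableOn_Ioi_max_rpow (hp : p < -1) (hc : 0 < c) :
    IntegrableOn (fun x ↦ max x c ^ p) (Ioi 0) := by
  rw [← Ioc_union_Ioi_eq_Ioi hc.le]
  refine IntegrableOn.union ?_ ?_
  · refine (integrableOn_const measure_Ioc_lt_top.ne (C := c ^ p)).congr_fun
      (fun x hx ↦ ?_) measurableSet_Ioc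
    rw [max_eq_right hx.2]
  · refine (integrableOn_Ioi_rpow_of_lt hp hc).congr_fun (fun x hx ↦ ?_) measurableSet_Ioi
    rw [max_eq_left (le_of_lt hx)]

lemma integral_Ioi_max_rpow (hp : p < -1) (hc : 0 < c) :
    ∫ x in Ioi 0, max x c ^ p = p / (p + 1) * c ^ (p + 1) := by
  have hIoc : ∫ x in Ioc 0 c, max x c ^ p = c ^ (p + 1) := by
    rw [setIntegral_congr_fun measurableSet_Ioc fun x hx ↦ by rw [max_eq_right hx.2],
      setIntegral_const, Real.volume_real_Ioc_of_le hc.le, sub_zero, smul_eq_mul,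
      Real.rpow_add_one hc.ne', mul_comm]
  have hIoi : ∫ x in Ioi c, max x c ^ p = -c ^ (p + 1) / (p + 1) := by
    rw [setIntegral_congr_fun measurableSet_Ioi fun x hx ↦ by rw [max_eq_left (le_of_lt hx)],
      integral_Ioi_rpow_of_lt hp hc]
  have hint := integrableOn_Ioi_max_rpow hp hc
  rw [← Ioc_union_Ioi_eq_Ioi hc.le] at hint ⊢
  rw [setIntegral_union (Ioc_disjoint_Ioi le_rfl) measurableSet_Ioi
    (hint.mono_set subset_union_left) (hint.mono_set subset_union_right), hIoc, hIoi]
  have : p + 1 ≠ 0 := by linarith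
  field_simp
  ring

end TruncatedPower

theorem sum_expectation_truncated_gamma_general
    {Ω : Type*} [MeasurableSpace Ω] (P : Measure Ω)
    (α : ℝ) (hα : 0 < α) (hα2 : α < 2) (M : ℝ) (hM : 0 < M)
    (Γ : ℕ → Ω → ℝ) (hΓmeas : ∀ j, Measurable (Γ j))
    (hΓ : ∀ j : ℕ, Measure.map (Γ j) P = gammaMeasure (j + 1) 1) :
    ∑' j : ℕ, ∫ ω, (max (Γ j ω) (M ^ (-α))) ^ (-(2 / α)) ∂P =
      2 / (2 - α) * M ^ (2 - α) := by
  set c := M ^ (-α)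
  have hc : 0 < c := Real.rpow_pos_of_pos hM _
  have hp : -(2 / α) < -1 := neg_lt_neg ((one_lt_div hα).mpr hα2)
  have hf : Continuous fun x ↦ max x c ^ (-(2 / α)) :=
    (continuous_id.max continuous_const).rpow_const fun x ↦
      .inl (hc.trans_le (le_max_right x c)).ne'
  calc ∑' j : ℕ, ∫ ω, max (Γ j ω) c ^ (-(2 / α)) ∂P
      = ∑' j : ℕ, ∫ x, max x c ^ (-(2 / α)) ∂gammaMeasure (j + 1) 1 := by
        simp_rw [← hΓ, integral_map (hΓmeas _).aemeasurable hf.aestronglyMeasurable]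
    _ = ∫ x in Ioi 0, max x c ^ (-(2 / α)) :=
        tsum_integral_gammaMeasure_natCast_add_one_one hf.measurable
          (fun x ↦ Real.rpow_nonneg (hc.le.trans (le_max_right x c)) _)
          (integrableOn_Ioi_max_rpow hp hc)
    _ = 2 / (2 - α) * M ^ (2 - α) := by
        have hp1 : -(2 / α) + 1 = -((2 - α) / α) := by field_simp; ring
        rw [integral_Ioi_max_rpow hp hc, ← Real.rpow_mul hM.le, hp1, neg_div_neg_eq,
          div_div_div_cancel_right₀ hα.ne', neg_mul_neg, mul_div_cancel₀ _ hα.ne']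

/-- If `Γ_j ~ Gamma(j+1, 1)` (the arrival times of a unit-rate Poisson process, i.e.
partial sums of i.i.d. Exp(1) variables) and `Γ_j^M = max(Γ_j, M^{-α})`, then
`∑_j E[(Γ_j^M)^{-2/α}] = (2/(2-α)) M^{2-α}`. -/
theorem sum_expectation_truncated_gamma
    {Ω : Type*} [MeasurableSpace Ω] (P : Measure Ω) [IsProbabilityMeasure P]
    (α : ℝ) (hα : 0 < α) (hα2 : α < 2) (M : ℝ) (hM : 0 < M)
    (Γ : ℕ → Ω → ℝ) (hΓmeas : ∀ j, Measurable (Γ j))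
    (hΓ : ∀ j : ℕ, Measure.map (Γ j) P = gammaMeasure (j + 1) 1) :
    ∑' j : ℕ, ∫ ω, (max (Γ j ω) (M ^ (-α))) ^ (-(2 / α)) ∂P =
      2 / (2 - α) * M ^ (2 - α) :=
  sum_expectation_truncated_gamma_general P α hα hα2 M hM Γ hΓmeas hΓ
end

section
/- Let $T_N$ be a symmetric $N \times N$ matrix and $G_{2N}$ a symmetric $2N\times 2N$ matrix such that $T_N$ is the top-left $N\times N$ principal submatrix of $G_{2N}$. Let $f : [0,\infty) \to [0,\infty)$ be bounded and non-decreasing. Then $\int f(|t|)\,d\mu_{T_N}(t) \leq 2\int f(|t|)\,d\mu_{G_{2N}}(t)$, where $\mu_A$ denotes the empirical spectral distribution of $A$. -/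
open MeasureTheory Matrix

/-- The empirical spectral distribution of a symmetric matrix: the uniform probability
measure on its eigenvalues, counted with multiplicity. -/
noncomputable def esd {n : ℕ} {A : Matrix (Fin n) (Fin n) ℝ}
    (hA : A.IsHermitian) : Measure ℝ :=
  (n : ENNReal)⁻¹ • ∑ i, Measure.dirac (hA.eigenvalues i)

/-!
If `T = J† G J` for an isometry `J`, the image under `J` of the span of the eigenvectors of `T`
with eigenvalue `> c` is a subspace of the same dimension on which the Rayleigh quotient of `G`
exceeds `c`; on such a subspace the coefficients along the eigenvectors of `G` with eigenvalue
`> c` cannot all vanish, so its dimension is at most the number of those. Applied to `±T, ±G`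
this gives `#{k | c < |λₖ(T)|} ≤ #{j | c < |λⱼ(G)|}` for all `c ≥ 0`, i.e. the `k`-th smallest
`|λ(T)|` is at most the `(k + N)`-th smallest `|λ(G)|`. Summing the monotone `f` gives
`∑ f |λ(T)| ≤ ∑ f |λ(G)|`, and the normalisations `1/N` and `1/(2N)` give the factor `2`.
-/

open Finset Function
open scoped RealInnerProductSpace

section Compression

variable {ι κ E F : Type*} [Fintype ι] [Fintype κ]
  [NormedAddCommGroup E] [InnerProductSpace ℝ E] [NormedAddCommGroup F] [InnerProductSpace ℝ F]
  {A : E →ₗ[ℝ] E} {b : OrthonormalBasis ι ℝ E} {μ : ι → ℝ}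

namespace OrthonormalBasis

theorem inner_map_self_eq_sum (hb : ∀ i, A (b i) = μ i • b i) (x : E) :
    ⟪x, A x⟫ = ∑ i, μ i * ⟪b i, x⟫ ^ 2 := by
  have hAx : A x = ∑ i, (⟪b i, x⟫ * μ i) • b i := by
    conv_lhs => rw [← b.sum_repr' x]
    simp only [map_sum, map_smul, hb, smul_smul]
  rw [hAx, inner_sum]
  refine sum_congr rfl fun i _ => ?_
  rw [real_inner_smul_right, real_inner_comm]
  ring

theorem finrank_le_card_lt (hb : ∀ i, A (b i) = μ i • b i) (c : ℝ) {W : Submodule ℝ E}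
    (hW : ∀ x ∈ W, x ≠ 0 → c * ‖x‖ ^ 2 < ⟪x, A x⟫) :
    Module.finrank ℝ W ≤ #{i | c < μ i} := by
  let φ : W →ₗ[ℝ] ({i // c < μ i} → ℝ) :=
    LinearMap.pi fun i => (innerₛₗ ℝ (b i)).comp W.subtype
  have hφ : Injective φ := by
    refine (injective_iff_map_eq_zero φ).mpr fun x hx => ?_
    by_contra hx0
    have hcoef : ∀ i, c < μ i → ⟪b i, (x : E)⟫ = 0 := fun i hi => congrFun hx ⟨i, hi⟩
    have hle : ⟪(x : E), A x⟫ ≤ c * ‖(x : E)‖ ^ 2 := by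
      rw [inner_map_self_eq_sum hb, ← b.sum_sq_inner_right, mul_sum]
      refine sum_le_sum fun i _ => ?_
      by_cases hi : c < μ i
      · simp [hcoef i hi]
      · exact mul_le_mul_of_nonneg_right (not_lt.mp hi) (sq_nonneg _)
    exact (hW x x.2 (by simpa using hx0)).not_ge hle
  calc Module.finrank ℝ W ≤ Module.finrank ℝ ({i // c < μ i} → ℝ) :=
        φ.finrank_le_finrank_of_injective hφ
    _ = #{i | c < μ i} := by rw [Module.finrank_fintype_fun_eq_card, Fintype.card_subtype]

theorem lt_inner_map_self_of_mem_span (hb : ∀ i, A (b i) = μ i • b i) {c : ℝ} {x : E}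
    (hx : x ∈ Submodule.span ℝ (Set.range fun i : {i // c < μ i} => b i)) (hx0 : x ≠ 0) :
    c * ‖x‖ ^ 2 < ⟪x, A x⟫ := by
  have hcoef : ∀ i, ¬ c < μ i → ⟪b i, x⟫ = 0 := by
    intro i hi
    refine Submodule.mem_orthogonal_singleton_iff_inner_right.mp (Submodule.span_le.mpr ?_ hx)
    rintro _ ⟨j, rfl⟩
    exact Submodule.mem_orthogonal_singleton_iff_inner_right.mpr
      (b.orthonormal.2 fun h => hi (h ▸ j.2))
  obtain ⟨i, hi⟩ : ∃ i, ⟪b i, x⟫ ≠ 0 := by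
    by_contra! h
    exact hx0 (by simpa [h] using (b.sum_repr' x).symm)
  have hμi : c < μ i := by_contra fun h => hi (hcoef i h)
  rw [← sub_pos, inner_map_self_eq_sum hb, ← b.sum_sq_inner_right, mul_sum, ← sum_sub_distrib]
  refine sum_pos' (fun j _ => ?_) ⟨i, mem_univ i, ?_⟩
  · by_cases hj : c < μ j
    · nlinarith [sq_nonneg ⟪b j, x⟫]
    · simp [hcoef j hj]
  · nlinarith [sq_pos_of_ne_zero hi]

variable {B : F →ₗ[ℝ] F} {b' : OrthonormalBasis κ ℝ F} {ν : κ → ℝ}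

theorem card_const_lt_le_of_compression (hb : ∀ i, A (b i) = μ i • b i)
    (hb' : ∀ j, B (b' j) = ν j • b' j) (J : E →ₗᵢ[ℝ] F) (hJ : ∀ x, ⟪J x, B (J x)⟫ = ⟪x, A x⟫)
    (c : ℝ) : #{i | c < μ i} ≤ #{j | c < ν j} := by
  set V := Submodule.span ℝ (Set.range fun i : {i // c < μ i} => b i)
  have hV : Module.finrank ℝ V = #{i | c < μ i} :=
    (finrank_span_eq_card (b.orthonormal.linearIndependent.comp _ Subtype.val_injective)).trans
      (Fintype.card_subtype _)
  rw [← hV, LinearEquiv.finrank_eq (Submodule.equivMapOfInjective _ J.injective V)]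
  refine b'.finrank_le_card_lt hb' c ?_
  rintro _ ⟨x, hx, rfl⟩ hx0
  rw [LinearIsometry.coe_toLinearMap, hJ, J.norm_map]
  exact b.lt_inner_map_self_of_mem_span hb hx (by rintro rfl; simp at hx0)

theorem card_lt_const_le_of_compression (hb : ∀ i, A (b i) = μ i • b i)
    (hb' : ∀ j, B (b' j) = ν j • b' j) (J : E →ₗᵢ[ℝ] F) (hJ : ∀ x, ⟪J x, B (J x)⟫ = ⟪x, A x⟫)
    (c : ℝ) : #{i | μ i < c} ≤ #{j | ν j < c} := by
  simpa only [Pi.neg_apply, neg_lt_neg_iff] using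
    card_const_lt_le_of_compression (A := -A) (b := b) (b' := b') (B := -B) (μ := -μ) (ν := -ν)
      (fun i => by simp [hb]) (fun j => by simp [hb']) J (fun x => by simp [hJ]) (-c)

end OrthonormalBasis

theorem card_lt_abs_eq_add {α : Type*} [Fintype α] (μ : α → ℝ) {c : ℝ} (hc : 0 ≤ c) :
    #{i | c < |μ i|} = #{i | c < μ i} + #{i | μ i < -c} := by
  classical
  rw [← card_union_of_disjoint (disjoint_filter.mpr fun i _ h h' => by linarith), ← filter_or]
  simp only [lt_abs, lt_neg]

end Compression

section Matrix
variable {m n : Type*} [Fintype m] [Fintype n]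

theorem Matrix.dotProduct_extend_zero {R : Type*} [NonUnitalNonAssocSemiring R] {e : m → n}
    (he : Injective e) (v : n → R) (x : m → R) :
    v ⬝ᵥ extend e x 0 = (v ∘ e) ⬝ᵥ x :=
  (Fintype.sum_of_injective e he _ _ (fun j hj => by simp [extend_apply' _ _ _ hj])
    (fun i => by simp [he.extend_apply])).symm

theorem Matrix.mulVec_extend_zero_comp {R : Type*} [NonUnitalNonAssocSemiring R] {e : m → n}
    (he : Injective e) (B : Matrix n n R) (x : m → R) :
    (B *ᵥ extend e x 0) ∘ e = B.submatrix e e *ᵥ x := by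
  ext i
  exact dotProduct_extend_zero he _ x

noncomputable def EuclideanSpace.extendByZero (e : m ↪ n) :
    EuclideanSpace ℝ m →ₗᵢ[ℝ] EuclideanSpace ℝ n :=
  LinearMap.isometryOfInner
    ((WithLp.linearEquiv 2 ℝ (n → ℝ)).symm.toLinearMap ∘ₗ ExtendByZero.linearMap ℝ e ∘ₗ
      (WithLp.linearEquiv 2 ℝ (m → ℝ)).toLinearMap)
    (fun x y => by
      change extend e y.ofLp 0 ⬝ᵥ extend e x.ofLp 0 = y.ofLp ⬝ᵥ x.ofLp
      rw [dotProduct_extend_zero e.injective, extend_comp e.injective])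

theorem EuclideanSpace.ofLp_extendByZero (e : m ↪ n) (x : EuclideanSpace ℝ m) :
    (extendByZero e x).ofLp = extend e x.ofLp 0 := rfl

variable [DecidableEq m] [DecidableEq n]

theorem EuclideanSpace.inner_extendByZero_toEuclideanLin (e : m ↪ n) (B : Matrix n n ℝ)
    (x : EuclideanSpace ℝ m) :
    ⟪extendByZero e x, toEuclideanLin B (extendByZero e x)⟫ =
      ⟪x, toEuclideanLin (B.submatrix e e) x⟫ := by
  simp only [EuclideanSpace.inner_eq_star_dotProduct, ofLp_toLpLin, toLin'_apply,
    ofLp_extendByZero, star_trivial]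
  rw [dotProduct_extend_zero e.injective, mulVec_extend_zero_comp e.injective]

theorem Matrix.IsHermitian.toEuclideanLin_eigenvectorBasis {𝕜 : Type*} [RCLike 𝕜]
    {A : Matrix n n 𝕜} (hA : A.IsHermitian) (i : n) :
    toEuclideanLin A (hA.eigenvectorBasis i) = hA.eigenvalues i • hA.eigenvectorBasis i := by
  ext j
  simp [hA.mulVec_eigenvectorBasis]

theorem Matrix.IsHermitian.card_lt_abs_eigenvalues_le_of_submatrix
    {A : Matrix m m ℝ} {B : Matrix n n ℝ} (hA : A.IsHermitian) (hB : B.IsHermitian) (e : m ↪ n)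
    (hAB : B.submatrix e e = A)
    {c : ℝ} (hc : 0 ≤ c) :
    #{i | c < |hA.eigenvalues i|} ≤ #{j | c < |hB.eigenvalues j|} := by
  have hJ : ∀ x, ⟪EuclideanSpace.extendByZero e x,
      toEuclideanLin B (EuclideanSpace.extendByZero e x)⟫ = ⟪x, toEuclideanLin A x⟫ :=
    fun x => hAB ▸ EuclideanSpace.inner_extendByZero_toEuclideanLin e B x
  rw [card_lt_abs_eq_add _ hc, card_lt_abs_eq_add _ hc]
  exact add_le_add
    (OrthonormalBasis.card_const_lt_le_of_compression hA.toEuclideanLin_eigenvectorBasis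
      hB.toEuclideanLin_eigenvectorBasis _ hJ c)
    (OrthonormalBasis.card_lt_const_le_of_compression hA.toEuclideanLin_eigenvectorBasis
      hB.toEuclideanLin_eigenvectorBasis _ hJ (-c))

end Matrix

theorem card_filter_comp_perm {α : Type*} [Fintype α] (σ : Equiv.Perm α) (p : α → Prop)
    [DecidablePred p] : #{i | p (σ i)} = #{i | p i} := by
  rw [← Fintype.card_subtype, ← Fintype.card_subtype]
  exact Fintype.card_congr (σ.subtypeEquiv fun _ => Iff.rfl)

theorem sort_apply_le_sort_apply_of_card_lt_le {n m : ℕ} (hnm : n ≤ m) {s : Set ℝ}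
    {a : Fin n → ℝ} {b : Fin m → ℝ} (hb : ∀ j, b j ∈ s)
    (hcount : ∀ c ∈ s, #{i | c < a i} ≤ #{j | c < b j}) (k : Fin n) :
    a (Tuple.sort a k) ≤ b (Tuple.sort b ⟨k + (m - n), by omega⟩) := by
  by_contra! hlt
  set c := b (Tuple.sort b ⟨k + (m - n), by omega⟩)
  have hca : n - k ≤ #{i | c < a i} := by
    rw [← card_filter_comp_perm (Tuple.sort a), ← Fin.card_Ici k]
    refine card_le_card fun i hi => ?_
    simpa using hlt.trans_le (Tuple.monotone_sort a (mem_Ici.mp hi))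
  have hcb : #{j | c < b j} ≤ n - k - 1 := by
    rw [← card_filter_comp_perm (Tuple.sort b)]
    calc #{j | c < b (Tuple.sort b j)} ≤ #(Ioi (⟨k + (m - n), by omega⟩ : Fin m)) :=
          card_le_card fun j hj => mem_Ioi.mpr <| not_le.mp fun hle =>
            (Tuple.monotone_sort b hle).not_gt (mem_filter.mp hj).2
      _ = n - k - 1 := by rw [Fin.card_Ioi, Fin.val_mk]; omega
  have := hcount c (hb _)
  omega

theorem sum_le_sum_of_card_lt_le {n m : ℕ} (hnm : n ≤ m) {s : Set ℝ}
    {a : Fin n → ℝ} {b : Fin m → ℝ} (ha : ∀ i, a i ∈ s) (hb : ∀ j, b j ∈ s)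
    (hcount : ∀ c ∈ s, #{i | c < a i} ≤ #{j | c < b j})
    {f : ℝ → ℝ} (hf : MonotoneOn f s) (hf0 : ∀ x ∈ s, 0 ≤ f x) :
    ∑ i, f (a i) ≤ ∑ j, f (b j) := by
  let shift : Fin n ↪ Fin m := ⟨fun k => ⟨k + (m - n), by omega⟩, fun k l h => by
    simpa [Fin.ext_iff] using h⟩
  calc ∑ i, f (a i) = ∑ k, f (a (Tuple.sort a k)) := (Equiv.sum_comp _ (f ∘ a)).symm
    _ ≤ ∑ k, f (b (Tuple.sort b (shift k))) := sum_le_sum fun k _ =>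
        hf (ha _) (hb _) (sort_apply_le_sort_apply_of_card_lt_le hnm hb hcount k)
    _ = ∑ j ∈ univ.map shift, f (b (Tuple.sort b j)) := by rw [sum_map]
    _ ≤ ∑ j, f (b (Tuple.sort b j)) :=
        sum_le_sum_of_subset_of_nonneg (subset_univ _) fun j _ _ => hf0 _ (hb _)
    _ = ∑ j, f (b j) := Equiv.sum_comp _ (f ∘ b)

theorem integral_esd {n : ℕ} {A : Matrix (Fin n) (Fin n) ℝ} (hA : A.IsHermitian) (g : ℝ → ℝ) :
    ∫ t, g t ∂(esd hA) = (n : ℝ)⁻¹ * ∑ i, g (hA.eigenvalues i) := by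
  rw [esd, integral_smul_measure, integral_finsetSum_measure fun i _ =>
    (integrable_const (g (hA.eigenvalues i))).congr (ae_eq_dirac g).symm]
  simp only [integral_dirac, ENNReal.toReal_inv, ENNReal.toReal_natCast, smul_eq_mul]

/-- If the symmetric matrix `T` is the top-left `N × N` principal submatrix of the
symmetric `2N × 2N` matrix `G`, then for every bounded non-decreasing
`f : [0,∞) → [0,∞)` one has `∫ f(|t|) dμ_T ≤ 2 ∫ f(|t|) dμ_G`, where `μ_A` denotes the
empirical spectral distribution. -/
theorem esd_integral_submatrix_bound
    (N : ℕ)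
    (T : Matrix (Fin N) (Fin N) ℝ) (hT : T.IsHermitian)
    (G : Matrix (Fin (2 * N)) (Fin (2 * N)) ℝ) (hG : G.IsHermitian)
    (hsub : ∀ i j : Fin N,
      G (Fin.castLE (by omega) i) (Fin.castLE (by omega) j) = T i j)
    (f : ℝ → ℝ) (hf0 : ∀ x, 0 ≤ f x) (hfmono : MonotoneOn f (Set.Ici 0)) :
    ∫ t, f |t| ∂(esd hT) ≤ 2 * ∫ t, f |t| ∂(esd hG) := by
  have hcount : ∀ c ∈ Set.Ici (0 : ℝ),
      #{i | c < |hT.eigenvalues i|} ≤ #{j | c < |hG.eigenvalues j|} := fun c hc =>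
    hT.card_lt_abs_eigenvalues_le_of_submatrix hG (Fin.castLEEmb (by omega)) (ext hsub) hc
  have hsum : ∑ i, f |hT.eigenvalues i| ≤ ∑ j, f |hG.eigenvalues j| :=
    sum_le_sum_of_card_lt_le (by omega) (fun _ => Set.mem_Ici.mpr (abs_nonneg _))
      (fun _ => Set.mem_Ici.mpr (abs_nonneg _)) hcount hfmono fun x _ => hf0 x
  rw [integral_esd, integral_esd, Nat.cast_mul, Nat.cast_two, mul_inv, mul_assoc, ← mul_assoc 2,
    mul_inv_cancel₀ two_ne_zero, one_mul]
  exact mul_le_mul_of_nonneg_left hsum (by positivity)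
end
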